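/- With the partition construction of G and B: Σ_{S : S induces a spanning tree of G and E_r ⊆ S} det(B_S) = Σ_{S ∈ 𝒞} det(A_S). -/

import Mathlib

open scoped Classical

/-- The principal minor of `A` on the index set `S` (equal to `1` when `S = ∅`). -/
noncomputable def principalMinor {ι : Type*} [DecidableEq ι]
    (A : Matrix ι ι ℝ) (S : Finset ι) : ℝ :=
  (A.submatrix (fun i : ↥S => (i : ι)) (fun i : ↥S => (i : ι))).det

/-- The edge of the graph `G` associated with an edge index in `Fin m ⊕ Fin m`:
the left edge `{v_{g j}, w_{g j, j}}` and the right edge `{w_{g j, j}, v_{g j + 1}}`. -/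
def partEdge {n m : ℕ} (g : Fin m → Fin n) : (Fin m ⊕ Fin m) → Sym2 (Fin (n + 1) ⊕ Fin m)
  | Sum.inl j => s(Sum.inl (g j).castSucc, Sum.inr j)
  | Sum.inr j => s(Sum.inr j, Sum.inl (g j).succ)

/-- The spanning subgraph of `G` whose edges are those indexed by `S ⊆ Fin m ⊕ Fin m`. -/
def partSubgraph {n m : ℕ} (g : Fin m → Fin n) (S : Finset (Fin m ⊕ Fin m)) :
    SimpleGraph (Fin (n + 1) ⊕ Fin m) :=
  SimpleGraph.fromEdgeSet (partEdge g '' ↑S)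

/-- The matrix `B` of the construction: the left-left block is `A`, the right-right block is
the identity, and the off-diagonal blocks vanish. -/
def matB {m : ℕ} (A : Matrix (Fin m) (Fin m) ℝ) :
    Matrix (Fin m ⊕ Fin m) (Fin m ⊕ Fin m) ℝ :=
  Matrix.of fun p q =>
    match p, q with
    | Sum.inl j₁, Sum.inl j₂ => A j₁ j₂
    | Sum.inr j, Sum.inr j' => if j = j' then 1 else 0
    | _, _ => 0

/-- The set `E_ℓ` of left edge indices. -/
def leftIdx (m : ℕ) : Finset (Fin m ⊕ Fin m) := Finset.univ.image Sum.inl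

/-- The set `E_r` of right edge indices. -/
def rightIdx (m : ℕ) : Finset (Fin m ⊕ Fin m) := Finset.univ.image Sum.inr

/-!
Since `E_r ⊆ S`, such an `S` is `T ⊔ E_r` for the set `T ⊆ Fin m` of its left edges. With all
right edges present, the vertex `v_i` is joined to `v_{i+1}` exactly through the `w_j` with
`j ∈ T ∩ P_i`, so the graph is connected iff `T` meets every fiber. A connected graph on
`n + m + 1` vertices is a tree iff it has `n + m` edges, i.e. iff `|T| = n`; hence the trees
correspond to the transversals `T ∈ 𝒞`. Finally `B_S` is block diagonal with blocks `A_T` and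
an identity matrix, so `det B_S = det A_T`.
-/

lemma Finset.forall_existsUnique_iff_forall_exists_and_card_eq {α β : Type*} [Fintype β]
    [DecidableEq β] {f : α → β} {s : Finset α} :
    (∀ b, ∃! a, a ∈ s ∧ f a = b) ↔ (∀ b, ∃ a, a ∈ s ∧ f a = b) ∧ s.card = Fintype.card β := by
  have image_eq_univ (h : ∀ b, ∃ a, a ∈ s ∧ f a = b) : s.image f = Finset.univ :=
    Finset.eq_univ_of_forall fun b => Finset.mem_image.2 (h b)
  constructor
  · intro h
    have hsurj : ∀ b, ∃ a, a ∈ s ∧ f a = b := fun b => (h b).exists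
    have hinj : Set.InjOn f s := fun a ha a' ha' e => (h (f a')).unique ⟨ha, e⟩ ⟨ha', rfl⟩
    refine ⟨hsurj, ?_⟩
    rw [← Finset.card_image_of_injOn hinj, image_eq_univ hsurj, Finset.card_univ]
  · rintro ⟨hsurj, hcard⟩ b
    have hinj : Set.InjOn f s :=
      Finset.card_image_iff.1 (by rw [image_eq_univ hsurj, Finset.card_univ, hcard])
    obtain ⟨a, ha, rfl⟩ := hsurj b
    exact ⟨a, ⟨ha, rfl⟩, fun a' ⟨ha', e⟩ => hinj ha' ha e⟩

lemma principalMinor_one {ι : Type*} [DecidableEq ι] (s : Finset ι) :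
    principalMinor (1 : Matrix ι ι ℝ) s = 1 := by
  rw [principalMinor, Matrix.submatrix_one _ Subtype.val_injective, Matrix.det_one]

lemma principalMinor_fromBlocks_zero {ι κ : Type*} [DecidableEq ι] [DecidableEq κ]
    (A : Matrix ι ι ℝ) (D : Matrix κ κ ℝ) (s : Finset ι) (t : Finset κ) :
    principalMinor (Matrix.fromBlocks A 0 0 D) (s.disjSum t) =
      principalMinor A s * principalMinor D t := by
  let e : ↥(s.disjSum t) ≃ ↥s ⊕ ↥t := Equiv.subtypeSum.trans <| Equiv.sumCongr
    (Equiv.subtypeEquivRight fun _ => Finset.inl_mem_disjSum)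
    (Equiv.subtypeEquivRight fun _ => Finset.inr_mem_disjSum)
  have h : (Matrix.fromBlocks A 0 0 D).submatrix (fun i : ↥(s.disjSum t) => (i : ι ⊕ κ))
      (fun i : ↥(s.disjSum t) => (i : ι ⊕ κ)) =
      (Matrix.fromBlocks (A.submatrix (fun i : ↥s => (i : ι)) (fun i : ↥s => (i : ι))) 0 0
        (D.submatrix (fun i : ↥t => (i : κ)) (fun i : ↥t => (i : κ)))).submatrix e e := by
    ext ⟨i | i, hi⟩ ⟨j | j, hj⟩ <;> rfl
  rw [principalMinor, h, Matrix.det_submatrix_equiv_self, Matrix.det_fromBlocks_zero₂₁,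
    principalMinor, principalMinor]

lemma matB_eq_fromBlocks {m : ℕ} (A : Matrix (Fin m) (Fin m) ℝ) :
    matB A = Matrix.fromBlocks A 0 0 1 := by
  ext (i | i) (j | j) <;> simp [matB, Matrix.one_apply]

lemma principalMinor_matB_disjSum_univ {m : ℕ} (A : Matrix (Fin m) (Fin m) ℝ)
    (T : Finset (Fin m)) :
    principalMinor (matB A) (T.disjSum Finset.univ) = principalMinor A T := by
  rw [matB_eq_fromBlocks, principalMinor_fromBlocks_zero, principalMinor_one, mul_one]

lemma rightIdx_subset_iff {m : ℕ} {S : Finset (Fin m ⊕ Fin m)} :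
    rightIdx m ⊆ S ↔ S.toLeft.disjSum Finset.univ = S := by
  have h : rightIdx m = (∅ : Finset (Fin m)).disjSum Finset.univ := by
    rw [Finset.empty_disjSum, rightIdx, Finset.map_eq_image]; rfl
  rw [h, Finset.disjSum_subset, Finset.disjSum_eq_iff]
  simp [eq_comm, Finset.univ_subset_iff]

section partSubgraph

variable {n m : ℕ} (g : Fin m → Fin n)

lemma partEdge_injective : Function.Injective (partEdge g) := by
  rintro (j₁ | j₁) (j₂ | j₂) h <;> simp only [partEdge, Sym2.eq_iff, Sum.inl.injEq,
    Sum.inr.injEq, reduceCtorEq, and_false, false_or, or_false] at h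
  · rw [h.2]
  · obtain ⟨h, rfl⟩ := h
    exact absurd h Fin.castSucc_lt_succ.ne
  · obtain ⟨rfl, h⟩ := h
    exact absurd h Fin.castSucc_lt_succ.ne'
  · rw [h.1]

lemma partEdge_not_isDiag (x : Fin m ⊕ Fin m) : ¬ (partEdge g x).IsDiag := by
  rcases x with j | j <;> simp [partEdge]

lemma partSubgraph_adj {S : Finset (Fin m ⊕ Fin m)} {a b : Fin (n + 1) ⊕ Fin m} :
    (partSubgraph g S).Adj a b ↔ ∃ x ∈ S, partEdge g x = s(a, b) := by
  rw [partSubgraph, SimpleGraph.fromEdgeSet_adj]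
  refine ⟨fun ⟨⟨x, hx, he⟩, _⟩ => ⟨x, hx, he⟩, fun ⟨x, hx, he⟩ => ⟨⟨x, hx, he⟩, ?_⟩⟩
  rintro rfl
  exact partEdge_not_isDiag g x (he ▸ Sym2.mk_isDiag_iff.2 rfl)

lemma card_edgeSet_partSubgraph (S : Finset (Fin m ⊕ Fin m)) :
    Nat.card (partSubgraph g S).edgeSet = S.card := by
  have h : (partSubgraph g S).edgeSet = partEdge g '' S := by
    rw [partSubgraph, SimpleGraph.edgeSet_fromEdgeSet, sdiff_eq_left, Set.disjoint_left]
    rintro _ ⟨x, -, rfl⟩ hx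
    exact partEdge_not_isDiag g x hx
  rw [h, Nat.card_coe_set_eq, Set.ncard_image_of_injective _ (partEdge_injective g),
    Set.ncard_coe_finset]

/-- The left edges of fiber `i` are the only edges crossing the cut between
`{v_0, …, v_i} ∪ ⋃_{k < i} P_k` and the rest. -/
lemma exists_inl_mem_of_connected_partSubgraph {S : Finset (Fin m ⊕ Fin m)}
    (hc : (partSubgraph g S).Connected) (i : Fin n) : ∃ j, Sum.inl j ∈ S ∧ g j = i := by
  let cut : Set (Fin (n + 1) ⊕ Fin m) := {v | Sum.elim (· ≤ i.castSucc) (g · < i) v}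
  obtain ⟨w⟩ := hc.preconnected (Sum.inl i.castSucc) (Sum.inl i.succ)
  obtain ⟨d, -, hin, hout⟩ := w.exists_boundary_dart cut (by simp [cut])
    (by simp [cut, Fin.le_def])
  obtain ⟨x, hx, he⟩ := (partSubgraph_adj g).1 d.adj
  rcases x with j | j
  · refine ⟨j, hx, ?_⟩
    rcases Sym2.eq_iff.1 he with ⟨h₁, h₂⟩ | ⟨h₁, h₂⟩ <;>
      simp only [← h₁, ← h₂, cut, Set.mem_ofPred_eq, Sum.elim_inl, Sum.elim_inr, Fin.le_def,
        Fin.lt_def, Fin.val_castSucc] at hin hout <;> omega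
  · rcases Sym2.eq_iff.1 he with ⟨h₁, h₂⟩ | ⟨h₁, h₂⟩ <;>
      simp only [← h₁, ← h₂, cut, Set.mem_ofPred_eq, Sum.elim_inl, Sum.elim_inr, Fin.le_def,
        Fin.lt_def, Fin.val_castSucc, Fin.val_succ] at hin hout <;> omega

lemma connected_partSubgraph_disjSum_univ {T : Finset (Fin m)}
    (hT : ∀ i, ∃ j, j ∈ T ∧ g j = i) : (partSubgraph g (T.disjSum Finset.univ)).Connected := by
  set G := partSubgraph g (T.disjSum Finset.univ)
  have right (j : Fin m) : G.Adj (Sum.inr j) (Sum.inl (g j).succ) :=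
    (partSubgraph_adj g).2 ⟨Sum.inr j, by simp, rfl⟩
  have step (i : Fin n) : G.Reachable (Sum.inl i.castSucc) (Sum.inl i.succ) := by
    obtain ⟨j, hj, rfl⟩ := hT i
    have left : G.Adj (Sum.inl (g j).castSucc) (Sum.inr j) :=
      (partSubgraph_adj g).2 ⟨Sum.inl j, by simpa using hj, rfl⟩
    exact left.reachable.trans (right j).reachable
  have spine (k : Fin (n + 1)) : G.Reachable (Sum.inl 0) (Sum.inl k) :=
    Fin.induction .rfl (fun i ih => ih.trans (step i)) k
  refine G.connected_iff_exists_forall_reachable.2 ⟨Sum.inl 0, ?_⟩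
  rintro (k | j)
  · exact spine k
  · exact (spine _).trans (right j).reachable.symm

lemma connected_partSubgraph_disjSum_univ_iff {T : Finset (Fin m)} :
    (partSubgraph g (T.disjSum Finset.univ)).Connected ↔ ∀ i, ∃ j, j ∈ T ∧ g j = i := by
  refine ⟨fun hc i => ?_, connected_partSubgraph_disjSum_univ g⟩
  simpa using exists_inl_mem_of_connected_partSubgraph g hc i

lemma isTree_partSubgraph_disjSum_univ_iff {T : Finset (Fin m)} :
    (partSubgraph g (T.disjSum Finset.univ)).IsTree ↔ ∀ i, ∃! j, j ∈ T ∧ g j = i := by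
  rw [SimpleGraph.isTree_iff_connected_and_card, connected_partSubgraph_disjSum_univ_iff,
    card_edgeSet_partSubgraph, Finset.card_disjSum,
    Finset.forall_existsUnique_iff_forall_exists_and_card_eq]
  simp only [Finset.card_univ, Fintype.card_fin, Nat.card_eq_fintype_card, Fintype.card_sum]
  exact and_congr_right fun _ => by omega

end partSubgraph

theorem part_sum_spanningTrees_eq_sum_transversals_general {n m : ℕ}
    (g : Fin m → Fin n)
    (A : Matrix (Fin m) (Fin m) ℝ) :
    ∑ S ∈ Finset.univ.filter (fun S : Finset (Fin m ⊕ Fin m) =>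
        (partSubgraph g S).IsTree ∧ rightIdx m ⊆ S),
      principalMinor (matB A) S
    = ∑ T ∈ Finset.univ.filter (fun T : Finset (Fin m) =>
        ∀ i : Fin n, ∃! j : Fin m, j ∈ T ∧ g j = i),
      principalMinor A T := by
  refine Finset.sum_nbij' Finset.toLeft (·.disjSum Finset.univ) ?_ ?_ ?_ ?_ ?_ <;>
    simp only [Finset.mem_filter, Finset.mem_univ, true_and]
  · rintro S ⟨htree, hsub⟩
    rw [← rightIdx_subset_iff.1 hsub] at htree
    exact (isTree_partSubgraph_disjSum_univ_iff g).1 htree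
  · intro T hT
    exact ⟨(isTree_partSubgraph_disjSum_univ_iff g).2 hT, rightIdx_subset_iff.2 (by simp)⟩
  · exact fun S ⟨_, hsub⟩ => rightIdx_subset_iff.1 hsub
  · exact fun T _ => Finset.toLeft_disjSum
  · rintro S ⟨_, hsub⟩
    conv_lhs => rw [← rightIdx_subset_iff.1 hsub]
    exact principalMinor_matB_disjSum_univ A S.toLeft

/-- For the partition construction: the sum of `det (B_S)` over all `S` inducing a spanning
tree of `G` and containing `E_r` equals the sum of `det (A_T)` over all `T ∈ 𝒞`, the subsets
of `Fin m` meeting every fiber `P_i = g⁻¹(i)` in exactly one element. -/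
theorem part_sum_spanningTrees_eq_sum_transversals {n m : ℕ} (hn : 1 ≤ n) (hm : 1 ≤ m)
    (g : Fin m → Fin n) (hg : Function.Surjective g)
    (A : Matrix (Fin m) (Fin m) ℝ) (hA : A.PosSemidef) :
    ∑ S ∈ Finset.univ.filter (fun S : Finset (Fin m ⊕ Fin m) =>
        (partSubgraph g S).IsTree ∧ rightIdx m ⊆ S),
      principalMinor (matB A) S
    = ∑ T ∈ Finset.univ.filter (fun T : Finset (Fin m) =>
        ∀ i : Fin n, ∃! j : Fin m, j ∈ T ∧ g j = i),
      principalMinor A T :=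
  part_sum_spanningTrees_eq_sum_transversals_general g A
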